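/- arXiv:1211.2991 — 6 statements merged into one kernel-verified Lean document; each statement's English description precedes it below -/
import Mathlib

section
/- Let (X,d,W) be a W-hyperbolic space, T:X→X uniformly continuous with modulus α_T (i.e., for all x,y∈X and k∈ℕ, d(x,y) ≤ 2^{-α_T(k)} implies d(Tx,Ty) ≤ 2^{-k}), and x∈X with d(x,Tx) ≤ b for some b∈ℕ. Then Ω(n) := n·2^{α_T(0)} + 1 + b is a modulus of majorizability of T at x: for all n∈ℕ and y∈X, d(x,y) ≤ n implies d(x,Ty) ≤ Ω(n). -/
/-!
Join `x` to `y` by the points `W x y (i/N)`, `0 ≤ i ≤ N = n·2^{α(0)}`, of the segment `[x, y]`. By (W2)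
consecutive points are `d(x,y)/N ≤ 2^{-α(0)}` apart, so their images under `T` are at most `1`
apart, whence `d(Tx, Ty) ≤ N`; the triangle inequality through `Tx` then gives the bound.
-/

section WHyperbolic

variable {X : Type*} [MetricSpace X] {W : X → X → ℝ → X}

theorem W_zero_eq_left
    (W1 : ∀ (x y z : X), ∀ l ∈ Set.Icc (0:ℝ) 1,
      dist z (W x y l) ≤ (1 - l) * dist z x + l * dist z y)
    (x y : X) : W x y 0 = x :=
  (dist_le_zero.mp (by simpa using W1 x y x 0 ⟨le_rfl, zero_le_one⟩)).symm

theorem W_one_eq_right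
    (W1 : ∀ (x y z : X), ∀ l ∈ Set.Icc (0:ℝ) 1,
      dist z (W x y l) ≤ (1 - l) * dist z x + l * dist z y)
    (x y : X) : W x y 1 = y :=
  (dist_le_zero.mp (by simpa using W1 x y y 1 ⟨zero_le_one, le_rfl⟩)).symm

theorem dist_W_div_W_succ_div
    (W2 : ∀ (x y : X), ∀ l ∈ Set.Icc (0:ℝ) 1, ∀ l' ∈ Set.Icc (0:ℝ) 1,
      dist (W x y l) (W x y l') = |l - l'| * dist x y)
    (x y : X) {N i : ℕ} (hi : i < N) :
    dist (W x y (i / N)) (W x y ((i + 1 : ℕ) / N)) = dist x y / N := by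
  have hN : (0 : ℝ) < N := by exact_mod_cast (Nat.zero_le i).trans_lt hi
  have mem : ∀ j ≤ N, (j : ℝ) / N ∈ Set.Icc (0:ℝ) 1 := fun j hj =>
    ⟨by positivity, (div_le_one hN).mpr (by exact_mod_cast hj)⟩
  rw [W2 x y _ (mem i hi.le) _ (mem (i + 1) hi), ← sub_div, Nat.cast_succ, sub_add_cancel_left,
    abs_div, abs_neg, abs_one, abs_of_pos hN, one_div_mul_eq_div]

theorem dist_map_le_mul_of_forall_dist_le
    (W1 : ∀ (x y z : X), ∀ l ∈ Set.Icc (0:ℝ) 1,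
      dist z (W x y l) ≤ (1 - l) * dist z x + l * dist z y)
    (W2 : ∀ (x y : X), ∀ l ∈ Set.Icc (0:ℝ) 1, ∀ l' ∈ Set.Icc (0:ℝ) 1,
      dist (W x y l) (W x y l') = |l - l'| * dist x y)
    {T : X → X} {δ ε : ℝ} (hT : ∀ u v, dist u v ≤ δ → dist (T u) (T v) ≤ ε)
    {x y : X} {N : ℕ} (hxy : dist x y ≤ N * δ) :
    dist (T x) (T y) ≤ N * ε := by
  rcases Nat.eq_zero_or_pos N with rfl | hN
  · obtain rfl : x = y := dist_le_zero.mp (by simpa using hxy)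
    simp
  have hNR : (0 : ℝ) < N := by exact_mod_cast hN
  let z : ℕ → X := fun i => T (W x y (i / N))
  have hz0 : z 0 = T x := by simp [z, W_zero_eq_left W1]
  have hzN : z N = T y := by simp [z, div_self hNR.ne', W_one_eq_right W1]
  have hstep : ∀ {i}, i < N → dist (z i) (z (i + 1)) ≤ ε := fun hi => by
    refine hT _ _ ?_
    rw [dist_W_div_W_succ_div W2 x y hi, div_le_iff₀' hNR]
    exact hxy
  simpa [hz0, hzN] using dist_le_range_sum_of_dist_le N hstep

end WHyperbolic

theorem stmt_4_general {X : Type*} [MetricSpace X] (W : X → X → ℝ → X)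
    (W1 : ∀ (x y z : X), ∀ l ∈ Set.Icc (0:ℝ) 1,
      dist z (W x y l) ≤ (1 - l) * dist z x + l * dist z y)
    (W2 : ∀ (x y : X), ∀ l ∈ Set.Icc (0:ℝ) 1, ∀ l' ∈ Set.Icc (0:ℝ) 1,
      dist (W x y l) (W x y l') = |l - l'| * dist x y)
    (T : X → X) (α : ℕ → ℕ)
    (hα : ∀ (x y : X) (k : ℕ), dist x y ≤ (1/2:ℝ)^(α k) → dist (T x) (T y) ≤ (1/2:ℝ)^k)
    (x : X) (b : ℕ) (hb : dist x (T x) ≤ b) :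
    ∀ (n : ℕ) (y : X), dist x y ≤ n → dist x (T y) ≤ n * 2^(α 0) + 1 + b := by
  intro n y hxy
  have hN : dist x y ≤ ((n * 2 ^ α 0 : ℕ) : ℝ) * (1/2) ^ α 0 := by
    rwa [Nat.cast_mul, Nat.cast_pow, mul_assoc, ← mul_pow, Nat.cast_ofNat, mul_one_div_cancel two_ne_zero,
      one_pow, mul_one]
  have hTxy := dist_map_le_mul_of_forall_dist_le W1 W2 (hα · · 0) hN
  push_cast at hTxy
  calc dist x (T y) ≤ dist x (T x) + dist (T x) (T y) := dist_triangle _ _ _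
    _ ≤ n * 2 ^ α 0 + 1 + b := by linarith

theorem stmt_4 {X : Type*} [MetricSpace X] (W : X → X → ℝ → X)
    (W1 : ∀ (x y z : X), ∀ l ∈ Set.Icc (0:ℝ) 1,
      dist z (W x y l) ≤ (1 - l) * dist z x + l * dist z y)
    (W2 : ∀ (x y : X), ∀ l ∈ Set.Icc (0:ℝ) 1, ∀ l' ∈ Set.Icc (0:ℝ) 1,
      dist (W x y l) (W x y l') = |l - l'| * dist x y)
    (W3 : ∀ (x y : X), ∀ l ∈ Set.Icc (0:ℝ) 1, W x y l = W y x (1 - l))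
    (W4 : ∀ (x y z w : X), ∀ l ∈ Set.Icc (0:ℝ) 1,
      dist (W x z l) (W y w l) ≤ (1 - l) * dist x y + l * dist z w)
    (T : X → X) (α : ℕ → ℕ)
    (hα : ∀ (x y : X) (k : ℕ), dist x y ≤ (1/2:ℝ)^(α k) → dist (T x) (T y) ≤ (1/2:ℝ)^k)
    (x : X) (b : ℕ) (hb : dist x (T x) ≤ b) :
    ∀ (n : ℕ) (y : X), dist x y ≤ n → dist x (T y) ≤ n * 2^(α 0) + 1 + b :=
  stmt_4_general W W1 W2 T α hα x b hb
end

section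
/- Let (X,d,W,η) be a UCW-hyperbolic space (W-hyperbolic with modulus of uniform convexity η nonincreasing in the first argument). If r>0, ε∈(0,2], and a,x,y∈X satisfy d(x,a) ≤ r, d(y,a) ≤ r, and d(x,y) ≥ εr, then for any λ∈[0,1] and any s ≥ r: d((1-λ)x⊕λy, a) ≤ (1 - 2λ(1-λ)η(s,ε))·r. -/
set_option maxHeartbeats 1000000 in

lemma stmt_5_aux {X : Type*} [MetricSpace X] (W : X → X → ℝ → X)
    (W1 : ∀ (x y z : X), ∀ l ∈ Set.Icc (0:ℝ) 1,
      dist z (W x y l) ≤ (1 - l) * dist z x + l * dist z y)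
    (W2 : ∀ (x y : X), ∀ l ∈ Set.Icc (0:ℝ) 1, ∀ l' ∈ Set.Icc (0:ℝ) 1,
      dist (W x y l) (W x y l') = |l - l'| * dist x y)
    (η : ℝ → ℝ → ℝ)
    (hηrange : ∀ r > (0:ℝ), ∀ ε, 0 < ε → ε ≤ 2 → 0 < η r ε ∧ η r ε ≤ 1)
    (hmod : ∀ r > (0:ℝ), ∀ ε, 0 < ε → ε ≤ 2 → ∀ a x y : X,
      dist x a ≤ r → dist y a ≤ r → ε * r ≤ dist x y →
      dist (W x y (1/2)) a ≤ (1 - η r ε) * r)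
    (hmono : ∀ ε, 0 < ε → ε ≤ 2 → ∀ r₁ r₂ : ℝ, 0 < r₁ → r₁ ≤ r₂ → η r₂ ε ≤ η r₁ ε)
    (r ε : ℝ) (hr : 0 < r) (hε1 : 0 < ε) (hε2 : ε ≤ 2) (a x y : X)
    (hxa : dist x a ≤ r) (hya : dist y a ≤ r) (hxy : ε * r ≤ dist x y)
    (l : ℝ) (hl0 : 0 ≤ l) (hl2 : l ≤ 1/2) (s : ℝ) (hs : r ≤ s) :
    dist (W x y l) a ≤ (1 - 2 * l * (1 - l) * η s ε) * r := by
  -- basic endpoint facts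
  have hW0 : ∀ p q : X, W p q 0 = p := by
    intro p q
    have h := W1 p q p 0 (by norm_num)
    simp at h
    exact h.symm
  have hWone : ∀ p q : X, W p q 1 = q := by
    intro p q
    have h := W1 p q q 1 (by norm_num)
    simp at h
    exact h.symm
  have hdx : ∀ (p q : X), ∀ t ∈ Set.Icc (0:ℝ) 1, dist (W p q t) p = t * dist p q := by
    intro p q t ht
    have h := W2 p q t ht 0 (by norm_num)
    rw [hW0] at h
    simpa [abs_of_nonneg ht.1] using h
  have hdy : ∀ (p q : X), ∀ t ∈ Set.Icc (0:ℝ) 1, dist (W p q t) q = (1 - t) * dist p q := by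
    intro p q t ht
    have h := W2 p q t ht 1 (by norm_num)
    rw [hWone] at h
    have : |t - 1| = 1 - t := by rw [abs_of_nonpos (by linarith [ht.2])]; ring
    rw [this] at h
    exact h
  have hlmem : l ∈ Set.Icc (0:ℝ) 1 := ⟨hl0, by linarith⟩
  have h2lmem : 2 * l ∈ Set.Icc (0:ℝ) 1 := ⟨by linarith, by linarith⟩
  have hd0 : 0 < dist x y := lt_of_lt_of_le (by positivity) hxy
  set d0 := dist x y with hd0def
  set m := W x y (1/2) with hm
  set u := W x y l with hu
  set v := W x m (2 * l) with hv
  -- eta facts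
  have hss : (0:ℝ) < s := lt_of_lt_of_le hr hs
  have hηs := hηrange s hss ε hε1 hε2
  have hηm : η s ε ≤ η r ε := hmono ε hε1 hε2 r s hr hs
  -- midpoint bound
  have dma : dist m a ≤ (1 - η s ε) * r := by
    have := hmod r hr ε hε1 hε2 a x y hxa hya hxy
    nlinarith
  -- distances of m
  have dmx : dist m x = (1/2) * d0 := hdx x y (1/2) (by norm_num)
  have dmy : dist m y = (1/2) * d0 := by
    have := hdy x y (1/2) (by norm_num); rw [this]; ring
  -- bound on v
  have dva : dist v a ≤ (1 - 2 * l * η s ε) * r := by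
    have h := W1 x m a (2 * l) h2lmem
    have hax : dist a x ≤ r := by rwa [dist_comm]
    have ham : dist a m ≤ (1 - η s ε) * r := by rwa [dist_comm]
    have hηs1 := hηs.2
    rw [dist_comm]
    nlinarith [h]
  -- u = v
  have huv : u = v := by
    rcases eq_or_lt_of_le hl0 with hzero | hlpos
    · rw [hu, hv, ← hzero]; norm_num [hW0]
    by_contra hne
    have hδ : 0 < dist u v := dist_pos.mpr hne
    have dux : dist u x = l * d0 := hdx x y l hlmem
    have duy : dist u y = (1 - l) * d0 := hdy x y l hlmem
    have dvx : dist v x = l * d0 := by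
      have := hdx x m (2 * l) h2lmem
      rw [this, dist_comm x m, dmx]; ring
    have dvm : dist v m = (1 - 2 * l) * dist x m := hdy x m (2 * l) h2lmem
    have dvy : dist v y = (1 - l) * d0 := by
      have h1 : dist v y ≤ (1 - l) * d0 := by
        have := dist_triangle v m y
        rw [dvm, dist_comm x m, dmx] at this
        linarith
      have h2 : d0 ≤ dist x v + dist v y := dist_triangle x v y
      rw [dist_comm x v, dvx] at h2
      linarith
    set r1 := l * d0 with hr1def
    set r2 := (1 - l) * d0 with hr2def
    have hr1 : 0 < r1 := by positivity
    have hr2 : 0 < r2 := by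
      have : 0 < 1 - l := by linarith
      positivity
    set ε1 := dist u v / r1 with hε1def
    set ε2 := dist u v / r2 with hε2def
    have hε1pos : 0 < ε1 := div_pos hδ hr1
    have hε2pos : 0 < ε2 := div_pos hδ hr2
    have hε1le : ε1 ≤ 2 := by
      rw [div_le_iff₀ hr1]
      have := dist_triangle u x v
      rw [dux, dist_comm x v, dvx] at this
      linarith
    have hε2le : ε2 ≤ 2 := by
      rw [div_le_iff₀ hr2]
      have := dist_triangle u y v
      rw [duy, dist_comm y v, dvy] at this
      linarith
    have hq1 := hmod r1 hr1 ε1 hε1pos hε1le x u v (le_of_eq dux) (le_of_eq dvx)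
      (le_of_eq (div_mul_cancel₀ _ (ne_of_gt hr1)))
    have hq2 := hmod r2 hr2 ε2 hε2pos hε2le y u v (le_of_eq duy) (le_of_eq dvy)
      (le_of_eq (div_mul_cancel₀ _ (ne_of_gt hr2)))
    have hη1 := (hηrange r1 hr1 ε1 hε1pos hε1le).1
    have hη2 := (hηrange r2 hr2 ε2 hε2pos hε2le).1
    have hlt1 : dist (W u v (1/2)) x < r1 := by nlinarith [hq1, mul_pos hη1 hr1]
    have hlt2 : dist (W u v (1/2)) y < r2 := by nlinarith [hq2, mul_pos hη2 hr2]
    have htri : d0 ≤ dist (W u v (1/2)) x + dist (W u v (1/2)) y := by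
      calc d0 ≤ dist x (W u v (1/2)) + dist (W u v (1/2)) y := dist_triangle _ _ _
        _ = _ := by rw [dist_comm x]
    have hsum : r1 + r2 = d0 := by ring
    linarith
  rw [huv]
  have hηs1 := hηs.1
  nlinarith [dva, mul_nonneg (mul_nonneg (mul_nonneg hl0 hl0) hηs1.le) hr.le]

theorem stmt_5 {X : Type*} [MetricSpace X] (W : X → X → ℝ → X)
    (W1 : ∀ (x y z : X), ∀ l ∈ Set.Icc (0:ℝ) 1,
      dist z (W x y l) ≤ (1 - l) * dist z x + l * dist z y)
    (W2 : ∀ (x y : X), ∀ l ∈ Set.Icc (0:ℝ) 1, ∀ l' ∈ Set.Icc (0:ℝ) 1,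
      dist (W x y l) (W x y l') = |l - l'| * dist x y)
    (W3 : ∀ (x y : X), ∀ l ∈ Set.Icc (0:ℝ) 1, W x y l = W y x (1 - l))
    (W4 : ∀ (x y z w : X), ∀ l ∈ Set.Icc (0:ℝ) 1,
      dist (W x z l) (W y w l) ≤ (1 - l) * dist x y + l * dist z w)
    (η : ℝ → ℝ → ℝ)
    (hηrange : ∀ r > (0:ℝ), ∀ ε, 0 < ε → ε ≤ 2 → 0 < η r ε ∧ η r ε ≤ 1)
    (hmod : ∀ r > (0:ℝ), ∀ ε, 0 < ε → ε ≤ 2 → ∀ a x y : X,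
      dist x a ≤ r → dist y a ≤ r → ε * r ≤ dist x y →
      dist (W x y (1/2)) a ≤ (1 - η r ε) * r)
    (hmono : ∀ ε, 0 < ε → ε ≤ 2 → ∀ r₁ r₂ : ℝ, 0 < r₁ → r₁ ≤ r₂ → η r₂ ε ≤ η r₁ ε)
    (r ε : ℝ) (hr : 0 < r) (hε1 : 0 < ε) (hε2 : ε ≤ 2) (a x y : X)
    (hxa : dist x a ≤ r) (hya : dist y a ≤ r) (hxy : ε * r ≤ dist x y) :
    ∀ l ∈ Set.Icc (0:ℝ) 1, ∀ s : ℝ, r ≤ s →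
      dist (W x y l) a ≤ (1 - 2 * l * (1 - l) * η s ε) * r := by
  intro l hl s hs
  rcases le_or_gt l (1/2) with h | h
  · exact stmt_5_aux W W1 W2 η hηrange hmod hmono r ε hr hε1 hε2 a x y hxa hya hxy
      l hl.1 h s hs
  · have hxy' : ε * r ≤ dist y x := by rwa [dist_comm]
    have h2 := stmt_5_aux W W1 W2 η hηrange hmod hmono r ε hr hε1 hε2 a y x hya hxa hxy'
      (1 - l) (by linarith [hl.2]) (by linarith) s hs
    rw [W3 x y l hl]
    have heq : (1 - 2 * (1 - l) * (1 - (1 - l)) * η s ε) * r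
        = (1 - 2 * l * (1 - l) * η s ε) * r := by ring
    rw [← heq]
    exact h2
end

section
/- Let (X,d,W) be a W-hyperbolic space, C⊆X convex, T:C→C nonexpansive, (λₙ),(sₙ) sequences in [0,1], and (xₙ) the Ishikawa iteration starting at x∈C. Then for all n∈ℕ: d(x_{n+1}, Tx_{n+1}) ≤ (1 + 2sₙ(1-λₙ))·d(xₙ,Txₙ). -/
/-!
With `d = d(xₙ, Txₙ)`, (W1) gives `d(xₙ, yₙ) ≤ sₙ d`, hence
`d(Txₙ, Tyₙ) ≤ sₙ d` and `d(yₙ, Tyₙ) ≤ d`. Going from `x_{n+1}` to `Tx_{n+1}` through `Tyₙ`,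
the first leg is at most `(1 - λₙ) d(xₙ, Tyₙ) ≤ (1 - λₙ)(1 + sₙ) d` and the second at most
`d(yₙ, x_{n+1}) ≤ (1 - λₙ) sₙ d + λₙ d`; these add up to `(1 + 2 sₙ (1 - λₙ)) d`.
-/

open Set

/-- Takahashi's convex structure, i.e. axiom (W1) of a W-hyperbolic space. -/
def IsConvexStructure {X : Type*} [MetricSpace X] (W : X → X → ℝ → X) : Prop :=
  ∀ x y z : X, ∀ l ∈ Icc (0 : ℝ) 1, dist z (W x y l) ≤ (1 - l) * dist z x + l * dist z y

def mannStep {X : Type*} (W : X → X → ℝ → X) (T : X → X) (s : ℝ) (a : X) : X :=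
  W a (T a) s

def ishikawaStep {X : Type*} (W : X → X → ℝ → X) (T : X → X) (l s : ℝ) (a : X) : X :=
  W a (T (mannStep W T s a)) l

namespace IsConvexStructure

variable {X : Type*} [MetricSpace X] {W : X → X → ℝ → X}

theorem dist_left_le (hW : IsConvexStructure W) (x y : X) {l : ℝ} (hl : l ∈ Icc (0 : ℝ) 1) :
    dist x (W x y l) ≤ l * dist x y := by
  simpa using hW x y x l hl

theorem dist_right_le (hW : IsConvexStructure W) (x y : X) {l : ℝ} (hl : l ∈ Icc (0 : ℝ) 1) :
    dist y (W x y l) ≤ (1 - l) * dist x y := by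
  simpa [dist_comm y x] using hW x y y l hl

variable {C : Set X} {T : X → X}

theorem dist_map_mannStep_le (hW : IsConvexStructure W)
    (hTnon : ∀ z ∈ C, ∀ w ∈ C, dist (T z) (T w) ≤ dist z w) {s : ℝ} (hs : s ∈ Icc (0 : ℝ) 1)
    {a : X} (ha : a ∈ C) (hy : mannStep W T s a ∈ C) :
    dist (T a) (T (mannStep W T s a)) ≤ s * dist a (T a) :=
  (hTnon a ha _ hy).trans (hW.dist_left_le a (T a) hs)

theorem dist_mannStep_map_le (hW : IsConvexStructure W)
    (hTnon : ∀ z ∈ C, ∀ w ∈ C, dist (T z) (T w) ≤ dist z w) {s : ℝ} (hs : s ∈ Icc (0 : ℝ) 1)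
    {a : X} (ha : a ∈ C) (hy : mannStep W T s a ∈ C) :
    dist (mannStep W T s a) (T (mannStep W T s a)) ≤ dist a (T a) := by
  set y := mannStep W T s a
  calc dist y (T y)
      ≤ dist (T a) y + dist (T a) (T y) := dist_triangle_left _ _ _
    _ ≤ (1 - s) * dist a (T a) + s * dist a (T a) :=
        add_le_add (hW.dist_right_le a (T a) hs) (hW.dist_map_mannStep_le hTnon hs ha hy)
    _ = dist a (T a) := by ring

theorem dist_ishikawaStep_map_le (hW : IsConvexStructure W)
    (hTnon : ∀ z ∈ C, ∀ w ∈ C, dist (T z) (T w) ≤ dist z w)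
    {l s : ℝ} (hl : l ∈ Icc (0 : ℝ) 1) (hs : s ∈ Icc (0 : ℝ) 1)
    {a : X} (ha : a ∈ C) (hy : mannStep W T s a ∈ C) (hx' : ishikawaStep W T l s a ∈ C) :
    dist (ishikawaStep W T l s a) (T (ishikawaStep W T l s a)) ≤
      (1 + 2 * s * (1 - l)) * dist a (T a) := by
  set y := mannStep W T s a
  set x' := ishikawaStep W T l s a
  set d := dist a (T a)
  have hl' : 0 ≤ 1 - l := sub_nonneg.2 hl.2
  have hTaTy : dist (T a) (T y) ≤ s * d := hW.dist_map_mannStep_le hTnon hs ha hy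
  have haTy : dist a (T y) ≤ (1 + s) * d := by
    linarith [dist_triangle a (T a) (T y)]
  have hx'Ty : dist x' (T y) ≤ (1 - l) * ((1 + s) * d) := by
    rw [dist_comm]
    exact (hW.dist_right_le a (T y) hl).trans (mul_le_mul_of_nonneg_left haTy hl')
  have hyx' : dist y x' ≤ (1 - l) * (s * d) + l * d := by
    calc dist y x' ≤ (1 - l) * dist y a + l * dist y (T y) := hW a (T y) y l hl
      _ ≤ (1 - l) * (s * d) + l * d := add_le_add
          (mul_le_mul_of_nonneg_left (dist_comm y a ▸ hW.dist_left_le a (T a) hs) hl')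
          (mul_le_mul_of_nonneg_left (hW.dist_mannStep_map_le hTnon hs ha hy) hl.1)
  calc dist x' (T x') ≤ dist x' (T y) + dist (T y) (T x') := dist_triangle _ _ _
    _ ≤ (1 - l) * ((1 + s) * d) + ((1 - l) * (s * d) + l * d) :=
        add_le_add hx'Ty ((hTnon y hy x' hx').trans hyx')
    _ = (1 + 2 * s * (1 - l)) * d := by ring

end IsConvexStructure

theorem stmt_7_general {X : Type*} [MetricSpace X] (W : X → X → ℝ → X)
    (W1 : ∀ (x y z : X), ∀ l ∈ Set.Icc (0:ℝ) 1,
      dist z (W x y l) ≤ (1 - l) * dist z x + l * dist z y)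
    (C : Set X)
    (hC : ∀ x ∈ C, ∀ y ∈ C, ∀ l ∈ Set.Icc (0:ℝ) 1, W x y l ∈ C)
    (T : X → X) (hTC : ∀ z ∈ C, T z ∈ C)
    (hTnon : ∀ z ∈ C, ∀ w ∈ C, dist (T z) (T w) ≤ dist z w)
    (lam s : ℕ → ℝ) (hlam : ∀ n, lam n ∈ Set.Icc (0:ℝ) 1) (hs : ∀ n, s n ∈ Set.Icc (0:ℝ) 1)
    (x0 : X) (hx0C : x0 ∈ C) (x : ℕ → X) (hx0 : x 0 = x0)
    (hrec : ∀ n, x (n+1) = W (x n) (T (W (x n) (T (x n)) (s n))) (lam n))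
 :
    ∀ n : ℕ, dist (x (n+1)) (T (x (n+1))) ≤ (1 + 2 * s n * (1 - lam n)) * dist (x n) (T (x n)) := by
  have mannStep_mem : ∀ n, x n ∈ C → mannStep W T (s n) (x n) ∈ C := fun n hx =>
    hC _ hx _ (hTC _ hx) _ (hs n)
  have iterate_mem : ∀ n, x n ∈ C := by
    intro n
    induction n with
    | zero => exact hx0 ▸ hx0C
    | succ n ih => rw [hrec n]; exact hC _ ih _ (hTC _ (mannStep_mem n ih)) _ (hlam n)
  intro n
  have hstep : x (n + 1) = ishikawaStep W T (lam n) (s n) (x n) := hrec n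
  rw [hstep]
  exact IsConvexStructure.dist_ishikawaStep_map_le W1 hTnon (hlam n) (hs n) (iterate_mem n)
    (mannStep_mem n (iterate_mem n)) (hstep ▸ iterate_mem (n + 1))

theorem stmt_7 {X : Type*} [MetricSpace X] (W : X → X → ℝ → X)
    (W1 : ∀ (x y z : X), ∀ l ∈ Set.Icc (0:ℝ) 1,
      dist z (W x y l) ≤ (1 - l) * dist z x + l * dist z y)
    (W2 : ∀ (x y : X), ∀ l ∈ Set.Icc (0:ℝ) 1, ∀ l' ∈ Set.Icc (0:ℝ) 1,
      dist (W x y l) (W x y l') = |l - l'| * dist x y)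
    (W3 : ∀ (x y : X), ∀ l ∈ Set.Icc (0:ℝ) 1, W x y l = W y x (1 - l))
    (W4 : ∀ (x y z w : X), ∀ l ∈ Set.Icc (0:ℝ) 1,
      dist (W x z l) (W y w l) ≤ (1 - l) * dist x y + l * dist z w)
    (C : Set X)
    (hC : ∀ x ∈ C, ∀ y ∈ C, ∀ l ∈ Set.Icc (0:ℝ) 1, W x y l ∈ C)
    (T : X → X) (hTC : ∀ z ∈ C, T z ∈ C)
    (hTnon : ∀ z ∈ C, ∀ w ∈ C, dist (T z) (T w) ≤ dist z w)
    (lam s : ℕ → ℝ) (hlam : ∀ n, lam n ∈ Set.Icc (0:ℝ) 1) (hs : ∀ n, s n ∈ Set.Icc (0:ℝ) 1)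
    (x0 : X) (hx0C : x0 ∈ C) (x : ℕ → X) (hx0 : x 0 = x0)
    (hrec : ∀ n, x (n+1) = W (x n) (T (W (x n) (T (x n)) (s n))) (lam n))
 :
    ∀ n : ℕ, dist (x (n+1)) (T (x (n+1))) ≤ (1 + 2 * s n * (1 - lam n)) * dist (x n) (T (x n)) :=
  stmt_7_general W W1 C hC T hTC hTnon lam s hlam hs x0 hx0C x hx0 hrec
end

section
/- Let (X,d,W) be a W-hyperbolic space, C⊆X convex, T:C→C nonexpansive, and (xₙ) the Ishikawa iteration starting at x∈C with coefficient sequences (λₙ),(sₙ) in [0,1]. Suppose b>0 is such that for every δ>0 there exists z∈C with d(x,z) ≤ b and d(z,Tz) < δ (T has approximate fixed points in a b-neighborhood of x). Then d(xₙ,Txₙ) ≤ 2b for all n∈ℕ. -/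
/-!
Fix an approximate fixed point `z` with `d(z, Tz) < δ`. Nonexpansiveness gives
`d(Tu, z) ≤ d(u, z) + δ`, and since each convex combination `W u v l` lies no farther from `z`
than the farther of `u, v`, one Ishikawa step moves the iterate at most `2δ` away from `z`.
Hence `d(xₙ, z) ≤ b + 2nδ` and `d(xₙ, Txₙ) ≤ 2 d(xₙ, z) + δ ≤ 2b + (4n + 1)δ`; let `δ → 0`.
-/

theorem ishikawa_mem {X : Type*} (W : X → X → ℝ → X) (C : Set X)
    (hC : ∀ x ∈ C, ∀ y ∈ C, ∀ l ∈ Set.Icc (0:ℝ) 1, W x y l ∈ C)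
    (T : X → X) (hTC : ∀ z ∈ C, T z ∈ C)
    (lam s : ℕ → ℝ) (hlam : ∀ n, lam n ∈ Set.Icc (0:ℝ) 1) (hs : ∀ n, s n ∈ Set.Icc (0:ℝ) 1)
    (x : ℕ → X) (hx0C : x 0 ∈ C)
    (hrec : ∀ n, x (n+1) = W (x n) (T (W (x n) (T (x n)) (s n))) (lam n)) (n : ℕ) :
    x n ∈ C := by
  induction n with
  | zero => exact hx0C
  | succ n ih =>
    rw [hrec n]
    exact hC _ ih _ (hTC _ (hC _ ih _ (hTC _ ih) _ (hs n))) _ (hlam n)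

section Nonexpansive

variable {X : Type*} [MetricSpace X] {C : Set X} {T : X → X}

theorem dist_apply_le_of_nonexpansive
    (hT : ∀ z ∈ C, ∀ w ∈ C, dist (T z) (T w) ≤ dist z w) {y z : X} (hy : y ∈ C) (hz : z ∈ C) :
    dist z (T y) ≤ dist z y + dist z (T z) :=
  calc dist z (T y) ≤ dist z (T z) + dist (T z) (T y) := dist_triangle _ _ _
    _ ≤ dist z (T z) + dist z y := by gcongr; exact hT z hz y hy
    _ = dist z y + dist z (T z) := add_comm _ _

theorem dist_self_apply_le_of_nonexpansive
    (hT : ∀ z ∈ C, ∀ w ∈ C, dist (T z) (T w) ≤ dist z w) {y z : X} (hy : y ∈ C) (hz : z ∈ C) :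
    dist y (T y) ≤ 2 * dist y z + dist z (T z) :=
  calc dist y (T y) ≤ dist y z + dist z (T y) := dist_triangle _ _ _
    _ ≤ dist y z + (dist z y + dist z (T z)) := by
        gcongr; exact dist_apply_le_of_nonexpansive hT hy hz
    _ = 2 * dist y z + dist z (T z) := by rw [dist_comm z y]; ring

end Nonexpansive

section Ishikawa

variable {X : Type*} [MetricSpace X]

theorem dist_convexComb_le_of_dist_le (W : X → X → ℝ → X)
    (hW : ∀ (x y z : X), ∀ l ∈ Set.Icc (0:ℝ) 1,
      dist z (W x y l) ≤ (1 - l) * dist z x + l * dist z y)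
    {u v z : X} {l e : ℝ} (hl : l ∈ Set.Icc (0:ℝ) 1) (he : 0 ≤ e)
    (hv : dist z v ≤ dist z u + e) :
    dist z (W u v l) ≤ dist z u + e := by
  obtain ⟨hl0, hl1⟩ := hl
  calc dist z (W u v l) ≤ (1 - l) * dist z u + l * dist z v := hW u v z l ⟨hl0, hl1⟩
    _ ≤ (1 - l) * dist z u + l * (dist z u + e) := by gcongr
    _ = dist z u + l * e := by ring
    _ ≤ dist z u + e := by gcongr; exact mul_le_of_le_one_left he hl1

theorem dist_ishikawa_le (W : X → X → ℝ → X)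
    (hW : ∀ (x y z : X), ∀ l ∈ Set.Icc (0:ℝ) 1,
      dist z (W x y l) ≤ (1 - l) * dist z x + l * dist z y)
    (C : Set X) (hC : ∀ x ∈ C, ∀ y ∈ C, ∀ l ∈ Set.Icc (0:ℝ) 1, W x y l ∈ C)
    (T : X → X) (hTC : ∀ z ∈ C, T z ∈ C)
    (hT : ∀ z ∈ C, ∀ w ∈ C, dist (T z) (T w) ≤ dist z w)
    (lam s : ℕ → ℝ) (hlam : ∀ n, lam n ∈ Set.Icc (0:ℝ) 1) (hs : ∀ n, s n ∈ Set.Icc (0:ℝ) 1)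
    (x : ℕ → X) (hx0C : x 0 ∈ C)
    (hrec : ∀ n, x (n+1) = W (x n) (T (W (x n) (T (x n)) (s n))) (lam n))
    {z : X} (hz : z ∈ C) (n : ℕ) :
    dist z (x n) ≤ dist z (x 0) + 2 * n * dist z (T z) := by
  have hxC := ishikawa_mem W C hC T hTC lam s hlam hs x hx0C hrec
  set δ := dist z (T z)
  have hδ : 0 ≤ δ := dist_nonneg
  induction n with
  | zero => simp
  | succ n ih =>
    have hy : W (x n) (T (x n)) (s n) ∈ C := hC _ (hxC n) _ (hTC _ (hxC n)) _ (hs n)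
    have hinner : dist z (W (x n) (T (x n)) (s n)) ≤ dist z (x n) + δ :=
      dist_convexComb_le_of_dist_le W hW (hs n) hδ
        (dist_apply_le_of_nonexpansive hT (hxC n) hz)
    have hstep : dist z (x (n+1)) ≤ dist z (x n) + 2 * δ := by
      rw [hrec n]
      refine dist_convexComb_le_of_dist_le W hW (hlam n) (by positivity) ?_
      linarith [dist_apply_le_of_nonexpansive hT hy hz]
    push_cast
    linarith

end Ishikawa

theorem stmt_9_general {X : Type*} [MetricSpace X] (W : X → X → ℝ → X)
    (W1 : ∀ (x y z : X), ∀ l ∈ Set.Icc (0:ℝ) 1,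
      dist z (W x y l) ≤ (1 - l) * dist z x + l * dist z y)
    (C : Set X)
    (hC : ∀ x ∈ C, ∀ y ∈ C, ∀ l ∈ Set.Icc (0:ℝ) 1, W x y l ∈ C)
    (T : X → X) (hTC : ∀ z ∈ C, T z ∈ C)
    (hTnon : ∀ z ∈ C, ∀ w ∈ C, dist (T z) (T w) ≤ dist z w)
    (lam s : ℕ → ℝ) (hlam : ∀ n, lam n ∈ Set.Icc (0:ℝ) 1) (hs : ∀ n, s n ∈ Set.Icc (0:ℝ) 1)
    (x0 : X) (hx0C : x0 ∈ C) (x : ℕ → X) (hx0 : x 0 = x0)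
    (hrec : ∀ n, x (n+1) = W (x n) (T (W (x n) (T (x n)) (s n))) (lam n))
    (b : ℝ)
    (hafp : ∀ δ > (0:ℝ), ∃ z ∈ C, dist x0 z ≤ b ∧ dist z (T z) < δ) :
    ∀ n : ℕ, dist (x n) (T (x n)) ≤ 2 * b := by
  subst hx0
  intro n
  refine le_of_forall_pos_le_add fun ε hε => ?_
  obtain ⟨z, hzC, hzb, hzδ⟩ := hafp (ε / (4 * n + 1)) (by positivity)
  have hxnC := ishikawa_mem W C hC T hTC lam s hlam hs x hx0C hrec n
  have hxn := dist_ishikawa_le W W1 C hC T hTC hTnon lam s hlam hs x hx0C hrec hzC n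
  have hδε : (4 * n + 1) * dist z (T z) ≤ ε := ((lt_div_iff₀' (by positivity)).1 hzδ).le
  rw [dist_comm z (x 0)] at hxn
  linarith [dist_self_apply_le_of_nonexpansive hTnon hxnC hzC, dist_comm z (x n)]

theorem stmt_9 {X : Type*} [MetricSpace X] (W : X → X → ℝ → X)
    (W1 : ∀ (x y z : X), ∀ l ∈ Set.Icc (0:ℝ) 1,
      dist z (W x y l) ≤ (1 - l) * dist z x + l * dist z y)
    (W2 : ∀ (x y : X), ∀ l ∈ Set.Icc (0:ℝ) 1, ∀ l' ∈ Set.Icc (0:ℝ) 1,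
      dist (W x y l) (W x y l') = |l - l'| * dist x y)
    (W3 : ∀ (x y : X), ∀ l ∈ Set.Icc (0:ℝ) 1, W x y l = W y x (1 - l))
    (W4 : ∀ (x y z w : X), ∀ l ∈ Set.Icc (0:ℝ) 1,
      dist (W x z l) (W y w l) ≤ (1 - l) * dist x y + l * dist z w)
    (C : Set X)
    (hC : ∀ x ∈ C, ∀ y ∈ C, ∀ l ∈ Set.Icc (0:ℝ) 1, W x y l ∈ C)
    (T : X → X) (hTC : ∀ z ∈ C, T z ∈ C)
    (hTnon : ∀ z ∈ C, ∀ w ∈ C, dist (T z) (T w) ≤ dist z w)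
    (lam s : ℕ → ℝ) (hlam : ∀ n, lam n ∈ Set.Icc (0:ℝ) 1) (hs : ∀ n, s n ∈ Set.Icc (0:ℝ) 1)
    (x0 : X) (hx0C : x0 ∈ C) (x : ℕ → X) (hx0 : x 0 = x0)
    (hrec : ∀ n, x (n+1) = W (x n) (T (W (x n) (T (x n)) (s n))) (lam n))
    (b : ℝ) (hb : 0 < b)
    (hafp : ∀ δ > (0:ℝ), ∃ z ∈ C, dist x0 z ≤ b ∧ dist z (T z) < δ) :
    ∀ n : ℕ, dist (x n) (T (x n)) ≤ 2 * b :=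
  stmt_9_general W W1 C hC T hTC hTnon lam s hlam hs x0 hx0C x hx0 hrec b hafp
end

section
/- Let (X,d,W,η) be a UCW-hyperbolic space, C⊆X convex, T:C→C nonexpansive, and (xₙ) the Ishikawa iteration starting at x∈C with coefficients (λₙ),(sₙ)⊆[0,1]. Assume: (i) θ:ℕ→ℕ satisfies ∑_{k=0}^{θ(n)} λₖ(1-λₖ) ≥ n for all n; (ii) L,N₀∈ℕ with L ≥ 1 and sₙ ≤ 1 - 1/L for all n ≥ N₀; (iii) b>0 is such that for every δ>0 there is z∈C with d(x,z) ≤ b and d(z,Tz) < δ. Then for all ε>0 and all k∈ℕ there exists N with k ≤ N ≤ θ(P+k+N₀) such that d(x_N, Tx_N) < ε, where P = ⌈L(b+1)/(ε·η(b+1, ε/(L(b+1))))⌉. -/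
/-!
Uniform convexity makes geodesics unique, which gives `W a (W a c (1/2)) t = W a c (t/2)` and
with it the quantitative convexity inequality
`d((1-l)p ⊕ l q, a) ≤ (1 - 2 l (1-l) η(r, e)) r` whenever `d(p,q) ≥ e r`.
Suppose every iterate `x_n` with `k + N₀ ≤ n ≤ θ(P + k + N₀)` is `ε`-far from being fixed. Since
`s_n ≤ 1 - 1/L`, the points `x_n` and `T y_n` are then at least `ε/L` apart, so each step brings
the iterates closer to a `δ`-approximate fixed point `z` (with `d(x, z) ≤ b`) by
`λ_n (1 - λ_n) η (ε - δ)`, up to an error `2δ`. By the choice of `θ` these decrements add up to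
more than `b + 1` for small `δ`, which is impossible.
-/

open Finset Set

section WHyperbolic

variable {X : Type*} [MetricSpace X] {W : X → X → ℝ → X}
  (W1 : ∀ (x y z : X), ∀ l ∈ Set.Icc (0:ℝ) 1,
    dist z (W x y l) ≤ (1 - l) * dist z x + l * dist z y)
include W1

theorem dist_convexComb_le_of_le {x y a : X} {r l : ℝ} (hl : l ∈ Icc (0:ℝ) 1)
    (hx : dist x a ≤ r) (hy : dist y a ≤ r) : dist (W x y l) a ≤ r := by
  have h := W1 x y a l hl
  rw [dist_comm a x, dist_comm a y] at h
  rw [dist_comm]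
  nlinarith [mul_le_mul_of_nonneg_left hx (sub_nonneg.2 hl.2),
    mul_le_mul_of_nonneg_left hy hl.1]

theorem dist_left_convexComb_le (x y : X) {l : ℝ} (hl : l ∈ Icc (0:ℝ) 1) :
    dist x (W x y l) ≤ l * dist x y := by
  simpa using W1 x y x l hl

theorem dist_convexComb_right_le (x y : X) {l : ℝ} (hl : l ∈ Icc (0:ℝ) 1) :
    dist (W x y l) y ≤ (1 - l) * dist x y := by
  simpa [dist_comm y] using W1 x y y l hl

variable (η : ℝ → ℝ → ℝ) (hηpos : ∀ r > (0:ℝ), ∀ ε, 0 < ε → ε ≤ 2 → 0 < η r ε)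
  (hmod : ∀ r > (0:ℝ), ∀ ε, 0 < ε → ε ≤ 2 → ∀ a x y : X,
    dist x a ≤ r → dist y a ≤ r → ε * r ≤ dist x y →
    dist (W x y (1/2)) a ≤ (1 - η r ε) * r)
include hηpos hmod

/-- Geodesics are unique: the midpoint of two distinct such points would be a shortcut from
`a` to `c`. -/
theorem eq_of_dist_le_of_dist_le {a c p q : X} {r₁ r₂ : ℝ} (hac : r₁ + r₂ ≤ dist a c)
    (hpa : dist p a ≤ r₁) (hpc : dist p c ≤ r₂) (hqa : dist q a ≤ r₁) (hqc : dist q c ≤ r₂) :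
    p = q := by
  by_contra hpq
  have hr₁ : 0 < r₁ := by
    by_contra! h
    exact hpq ((dist_le_zero.1 (hpa.trans h)).trans (dist_le_zero.1 (hqa.trans h)).symm)
  have hpq' : 0 < dist p q := dist_pos.2 hpq
  have hpq₁ : dist p q ≤ 2 * r₁ := by
    linarith [dist_triangle_right p q a]
  have he : dist p q / r₁ * r₁ = dist p q := div_mul_cancel₀ _ hr₁.ne'
  have hma := hmod r₁ hr₁ _ (div_pos hpq' hr₁) ((div_le_iff₀ hr₁).2 hpq₁) a p q hpa hqa he.le
  have hmc := dist_convexComb_le_of_le W1 (l := 1/2) ⟨by norm_num, by norm_num⟩ hpc hqc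
  have hη := hηpos r₁ hr₁ _ (div_pos hpq' hr₁) ((div_le_iff₀ hr₁).2 hpq₁)
  have := dist_triangle_left a c (W p q (1/2))
  nlinarith [mul_pos hη hr₁]

theorem convexComb_convexComb_half (a c : X) {t : ℝ} (ht : t ∈ Icc (0:ℝ) 1) :
    W a (W a c (1/2)) t = W a c (t/2) := by
  have half : (1/2 : ℝ) ∈ Icc (0:ℝ) 1 := ⟨by norm_num, by norm_num⟩
  have ht2 : t/2 ∈ Icc (0:ℝ) 1 := ⟨by linarith [ht.1], by linarith [ht.2]⟩
  set m := W a c (1/2)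
  have ham := dist_left_convexComb_le W1 a c half
  have hmc := dist_convexComb_right_le W1 a c half
  have hpa := dist_left_convexComb_le W1 a m ht
  have hpm := dist_convexComb_right_le W1 a m ht
  have hqa := dist_left_convexComb_le W1 a c ht2
  have hqc := dist_convexComb_right_le W1 a c ht2
  refine eq_of_dist_le_of_dist_le W1 η hηpos hmod (a := a) (c := c) (r₁ := t/2 * dist a c)
    (r₂ := (1 - t/2) * dist a c) (by linarith) ?_ ?_ (by rwa [dist_comm]) hqc
  · rw [dist_comm]
    nlinarith [ht.1]
  · have := dist_triangle (W a m t) m c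
    nlinarith [ht.2]

theorem dist_convexComb_le_of_le_half {p q a : X} {r e l : ℝ} (hr : 0 < r) (he : 0 < e)
    (he2 : e ≤ 2) (hl : 0 ≤ l) (hl2 : l ≤ 1/2) (hp : dist p a ≤ r) (hq : dist q a ≤ r)
    (hpq : e * r ≤ dist p q) : dist (W p q l) a ≤ (1 - 2 * l * η r e) * r := by
  have hm := hmod r hr e he he2 a p q hp hq hpq
  have h2l : 2 * l ∈ Icc (0:ℝ) 1 := ⟨by linarith, by linarith⟩
  have hw := W1 p (W p q (1/2)) a (2 * l) h2l
  rw [convexComb_convexComb_half W1 η hηpos hmod p q h2l, mul_div_cancel_left₀ _ two_ne_zero,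
    dist_comm a p, dist_comm a (W p q (1/2))] at hw
  rw [dist_comm]
  nlinarith [mul_le_mul_of_nonneg_left hp (sub_nonneg.2 h2l.2),
    mul_le_mul_of_nonneg_left hm h2l.1]

theorem dist_convexComb_le_uniformlyConvex
    (W3 : ∀ (x y : X), ∀ l ∈ Set.Icc (0:ℝ) 1, W x y l = W y x (1 - l))
    {p q a : X} {r e l : ℝ} (hr : 0 < r) (he : 0 < e) (he2 : e ≤ 2) (hl : l ∈ Icc (0:ℝ) 1)
    (hp : dist p a ≤ r) (hq : dist q a ≤ r) (hpq : e * r ≤ dist p q) :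
    dist (W p q l) a ≤ (1 - 2 * l * (1 - l) * η r e) * r := by
  have hη := hηpos r hr e he he2
  rcases le_or_gt l (1/2) with hl2 | hl2
  · have h := dist_convexComb_le_of_le_half W1 η hηpos hmod hr he he2 hl.1 hl2 hp hq hpq
    nlinarith [mul_nonneg (mul_nonneg (mul_nonneg hl.1 hl.1) hη.le) hr.le]
  · rw [W3 p q l hl]
    have hl' : 0 ≤ 1 - l := by linarith [hl.2]
    have h := dist_convexComb_le_of_le_half W1 η hηpos hmod (l := 1 - l) hr he he2 hl'
      (by linarith) hq hp (by rwa [dist_comm])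
    nlinarith [mul_nonneg (mul_nonneg (mul_nonneg hl' hl') hη.le) hr.le]

end WHyperbolic

section Ishikawa

variable {X : Type*} [MetricSpace X] {C : Set X} {T : X → X}
  (hTnon : ∀ z ∈ C, ∀ w ∈ C, dist (T z) (T w) ≤ dist z w)
include hTnon

theorem dist_map_le_add {z w : X} {δ : ℝ} (hz : z ∈ C) (hzT : dist z (T z) ≤ δ) (hw : w ∈ C) :
    dist (T w) z ≤ dist w z + δ := by
  have := hTnon w hw z hz
  have := dist_triangle (T w) (T z) z
  rw [dist_comm z] at hzT
  linarith

theorem dist_self_map_le {z w : X} {δ : ℝ} (hz : z ∈ C) (hzT : dist z (T z) ≤ δ) (hw : w ∈ C) :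
    dist w (T w) ≤ 2 * dist w z + δ := by
  have := dist_map_le_add hTnon hz hzT hw
  have := dist_triangle w z (T w)
  rw [dist_comm z] at this
  linarith

variable {W : X → X → ℝ → X}
  (W1 : ∀ (x y z : X), ∀ l ∈ Set.Icc (0:ℝ) 1,
    dist z (W x y l) ≤ (1 - l) * dist z x + l * dist z y)
  (hC : ∀ x ∈ C, ∀ y ∈ C, ∀ l ∈ Set.Icc (0:ℝ) 1, W x y l ∈ C)
  (hTC : ∀ z ∈ C, T z ∈ C)
include W1 hC hTC

theorem dist_map_convexComb_le_add {z w : X} {δ s : ℝ} (hz : z ∈ C) (hzT : dist z (T z) ≤ δ)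
    (hδ : 0 ≤ δ) (hw : w ∈ C) (hs : s ∈ Icc (0:ℝ) 1) :
    dist (T (W w (T w) s)) z ≤ dist w z + 2 * δ := by
  have hy := dist_convexComb_le_of_le W1 hs (by linarith : dist w z ≤ dist w z + δ)
    (dist_map_le_add hTnon hz hzT hw)
  have := dist_map_le_add hTnon hz hzT (hC _ hw _ (hTC _ hw) _ hs)
  linarith

theorem dist_ishikawaStep_le_add {z w : X} {δ s l : ℝ} (hz : z ∈ C) (hzT : dist z (T z) ≤ δ)
    (hδ : 0 ≤ δ) (hw : w ∈ C) (hs : s ∈ Icc (0:ℝ) 1) (hl : l ∈ Icc (0:ℝ) 1) :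
    dist (W w (T (W w (T w) s)) l) z ≤ dist w z + 2 * δ :=
  dist_convexComb_le_of_le W1 hl (by linarith)
    (dist_map_convexComb_le_add hTnon W1 hC hTC hz hzT hδ hw hs)

theorem one_sub_mul_dist_self_map_le {w : X} {s : ℝ} (hw : w ∈ C) (hs : s ∈ Icc (0:ℝ) 1) :
    (1 - s) * dist w (T w) ≤ dist w (T (W w (T w) s)) := by
  have hy := hTnon _ (hC _ hw _ (hTC _ hw) _ hs) w hw
  have := dist_left_convexComb_le W1 w (T w) hs
  have := dist_triangle w (T (W w (T w) s)) (T w)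
  rw [dist_comm (W w (T w) s)] at hy
  linarith

variable (η : ℝ → ℝ → ℝ) (hηpos : ∀ r > (0:ℝ), ∀ ε, 0 < ε → ε ≤ 2 → 0 < η r ε)
  (hmod : ∀ r > (0:ℝ), ∀ ε, 0 < ε → ε ≤ 2 → ∀ a x y : X,
    dist x a ≤ r → dist y a ≤ r → ε * r ≤ dist x y →
    dist (W x y (1/2)) a ≤ (1 - η r ε) * r)
  (W3 : ∀ (x y : X), ∀ l ∈ Set.Icc (0:ℝ) 1, W x y l = W y x (1 - l))
  (hηmono : ∀ ε, 0 < ε → ε ≤ 2 → ∀ r₁ r₂ : ℝ, 0 < r₁ → r₁ ≤ r₂ → η r₂ ε ≤ η r₁ ε)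
include hηpos hmod W3 hηmono

theorem dist_ishikawaStep_le_sub {z w : X} {δ s l ε r R e : ℝ} (hz : z ∈ C)
    (hzT : dist z (T z) ≤ δ) (hδ : 0 < δ) (hw : w ∈ C) (hs : s ∈ Icc (0:ℝ) 1)
    (hl : l ∈ Icc (0:ℝ) 1) (hfar : ε ≤ dist w (T w)) (hr : dist w z + 2 * δ ≤ r) (hrR : r ≤ R)
    (he : 0 < e) (he2 : e ≤ 2) (heR : e * R ≤ (1 - s) * ε) :
    dist (W w (T (W w (T w) s)) l) z ≤ r - l * (1 - l) * η R e * (ε - δ) := by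
  have hr0 : 0 < r := by linarith [dist_nonneg (x := w) (y := z)]
  have hv := dist_map_convexComb_le_add hTnon W1 hC hTC hz hzT hδ.le hw hs
  have hwv : e * r ≤ dist w (T (W w (T w) s)) := by
    nlinarith [one_sub_mul_dist_self_map_le hTnon W1 hC hTC hw hs, sub_nonneg.2 hs.2]
  have hstep := dist_convexComb_le_uniformlyConvex W1 η hηpos hmod W3 (a := z) hr0 he he2 hl
    (by linarith) (by linarith) hwv
  have hmono := hηmono e he he2 r R hr0 hrR
  have hηR := hηpos R (hr0.trans_le hrR) e he he2
  have hεr : ε - δ ≤ 2 * r := by linarith [dist_self_map_le hTnon hz hzT hw]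
  have hll : 0 ≤ l * (1 - l) := mul_nonneg hl.1 (sub_nonneg.2 hl.2)
  nlinarith [mul_le_mul_of_nonneg_left hεr (mul_nonneg hll hηR.le),
    mul_le_mul_of_nonneg_left hmono (mul_nonneg hll hr0.le)]

end Ishikawa

theorem mul_one_sub_le_quarter (l : ℝ) : l * (1 - l) ≤ 1 / 4 := by
  nlinarith [sq_nonneg (2 * l - 1)]

theorem le_of_le_sum_mul_one_sub {lam : ℕ → ℝ} {m N : ℕ}
    (h : (m : ℝ) ≤ ∑ k ∈ range (N + 1), lam k * (1 - lam k)) : m ≤ N := by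
  have hsum : ∑ k ∈ range (N + 1), lam k * (1 - lam k) ≤ ∑ k ∈ range (N + 1), (1 / 4 : ℝ) :=
    sum_le_sum fun k _ => mul_one_sub_le_quarter (lam k)
  rw [sum_const, card_range, nsmul_eq_mul] at hsum
  have : 4 * m ≤ N + 1 := by
    exact_mod_cast (by push_cast at hsum ⊢; linarith : (4 * m : ℝ) ≤ (N + 1 : ℕ))
  omega

theorem sub_le_sum_Ico_mul_one_sub {lam : ℕ → ℝ} {m A N : ℕ} (hA : A ≤ N + 1)
    (h : (m : ℝ) ≤ ∑ k ∈ range (N + 1), lam k * (1 - lam k)) :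
    (m : ℝ) - A ≤ ∑ k ∈ Ico A (N + 1), lam k * (1 - lam k) := by
  rw [← sum_range_add_sum_Ico _ hA] at h
  have hhead : ∑ k ∈ range A, lam k * (1 - lam k) ≤ ∑ k ∈ range A, (1 : ℝ) :=
    sum_le_sum fun k _ => (mul_one_sub_le_quarter _).trans (by norm_num)
  rw [sum_const, card_range, nsmul_eq_mul, mul_one] at hhead
  linarith

section IshikawaSequence

variable {X : Type*} {C : Set X} {T : X → X} {W : X → X → ℝ → X}
  (hC : ∀ x ∈ C, ∀ y ∈ C, ∀ l ∈ Set.Icc (0:ℝ) 1, W x y l ∈ C)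
  (hTC : ∀ z ∈ C, T z ∈ C)
  {lam s : ℕ → ℝ} (hlam : ∀ n, lam n ∈ Set.Icc (0:ℝ) 1) (hs : ∀ n, s n ∈ Set.Icc (0:ℝ) 1)
  {x : ℕ → X} (hrec : ∀ n, x (n+1) = W (x n) (T (W (x n) (T (x n)) (s n))) (lam n))
include hC hTC hlam hs hrec

theorem ishikawa_mem_s11 (hx0 : x 0 ∈ C) (n : ℕ) : x n ∈ C := by
  induction n with
  | zero => exact hx0
  | succ n ih =>
    rw [hrec n]
    exact hC _ ih _ (hTC _ (hC _ ih _ (hTC _ ih) _ (hs n))) _ (hlam n)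

variable [MetricSpace X] (hTnon : ∀ z ∈ C, ∀ w ∈ C, dist (T z) (T w) ≤ dist z w)
  (W1 : ∀ (x y z : X), ∀ l ∈ Set.Icc (0:ℝ) 1,
    dist z (W x y l) ≤ (1 - l) * dist z x + l * dist z y)
include hTnon W1

theorem dist_ishikawa_le_add (hx0 : x 0 ∈ C) {z : X} {δ : ℝ} (hz : z ∈ C)
    (hzT : dist z (T z) ≤ δ) (hδ : 0 ≤ δ) (n : ℕ) :
    dist (x n) z ≤ dist (x 0) z + 2 * n * δ := by
  induction n with
  | zero => simp
  | succ n ih =>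
    rw [hrec n]
    have := dist_ishikawaStep_le_add hTnon W1 hC hTC hz hzT hδ
      (ishikawa_mem_s11 hC hTC hlam hs hrec hx0 n) (hs n) (hlam n)
    push_cast
    linarith

theorem dist_ishikawa_map_le (hx0 : x 0 ∈ C) {z : X} {δ : ℝ} (hz : z ∈ C)
    (hzT : dist z (T z) ≤ δ) (hδ : 0 ≤ δ) (n : ℕ) :
    dist (x n) (T (x n)) ≤ 2 * dist (x 0) z + (4 * n + 1) * δ := by
  have := dist_self_map_le hTnon hz hzT (ishikawa_mem_s11 hC hTC hlam hs hrec hx0 n)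
  have := dist_ishikawa_le_add hC hTC hlam hs hrec hTnon W1 hx0 hz hzT hδ n
  linarith

variable (η : ℝ → ℝ → ℝ) (hηpos : ∀ r > (0:ℝ), ∀ ε, 0 < ε → ε ≤ 2 → 0 < η r ε)
  (hmod : ∀ r > (0:ℝ), ∀ ε, 0 < ε → ε ≤ 2 → ∀ a x y : X,
    dist x a ≤ r → dist y a ≤ r → ε * r ≤ dist x y →
    dist (W x y (1/2)) a ≤ (1 - η r ε) * r)
  (W3 : ∀ (x y : X), ∀ l ∈ Set.Icc (0:ℝ) 1, W x y l = W y x (1 - l))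
  (hηmono : ∀ ε, 0 < ε → ε ≤ 2 → ∀ r₁ r₂ : ℝ, 0 < r₁ → r₁ ≤ r₂ → η r₂ ε ≤ η r₁ ε)
include hηpos hmod W3 hηmono

/-- Step `n` uses the radius `r = b + 2 (n + 1) δ - η (b + 1) e (ε - δ) Σ`; the condition
`2 (M + 1) δ ≤ 1` keeps these radii below `b + 1`, where the modulus is evaluated. -/
theorem ishikawa_dist_add_sum_le (hx0 : x 0 ∈ C) {z : X} {δ ε b L e : ℝ} {A M : ℕ}
    (hz : z ∈ C) (hzT : dist z (T z) ≤ δ) (hδ : 0 < δ) (hδε : δ ≤ ε)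
    (hδM : 2 * (M + 1) * δ ≤ 1) (hz0 : dist (x 0) z ≤ b)
    (hsL : ∀ n ≥ A, s n ≤ 1 - 1 / L) (he : 0 < e) (he2 : e ≤ 2) (heb : e * (b + 1) ≤ ε / L)
    (hfar : ∀ n, A ≤ n → n ≤ M → ε ≤ dist (x n) (T (x n))) :
    ∀ n, A ≤ n → n ≤ M + 1 →
      dist (x n) z + η (b + 1) e * (ε - δ) * ∑ i ∈ Ico A n, lam i * (1 - lam i)
        ≤ b + 2 * n * δ := by
  have hb : 0 ≤ b := dist_nonneg.trans hz0
  have hη : 0 < η (b + 1) e := hηpos _ (by linarith) e he he2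
  intro n hAn
  induction n, hAn using Nat.le_induction with
  | base =>
    intro _
    have := dist_ishikawa_le_add hC hTC hlam hs hrec hTnon W1 hx0 hz hzT hδ.le A
    simp only [Ico_self, sum_empty, mul_zero, add_zero]
    linarith
  | succ n hAn ih =>
    intro hnM
    have hxn := ishikawa_mem_s11 hC hTC hlam hs hrec hx0 n
    set S := ∑ i ∈ Ico A n, lam i * (1 - lam i)
    have hS : 0 ≤ S := sum_nonneg fun i _ => mul_nonneg (hlam i).1 (sub_nonneg.2 (hlam i).2)
    have hD : 0 ≤ η (b + 1) e * (ε - δ) * S := by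
      have : 0 ≤ ε - δ := by linarith
      positivity
    have hnδ : 2 * ((n : ℝ) + 1) * δ ≤ 1 := by
      have : (n : ℝ) ≤ M := by exact_mod_cast (by omega : n ≤ M)
      nlinarith
    have hεL : ε / L ≤ (1 - s n) * ε := by
      have : 1 / L ≤ 1 - s n := by linarith [hsL n hAn]
      rw [div_eq_mul_one_div, mul_comm]
      exact mul_le_mul_of_nonneg_right this (by linarith)
    have hstep := dist_ishikawaStep_le_sub hTnon W1 hC hTC η hηpos hmod W3 hηmono hz hzT hδ hxn
      (hs n) (hlam n) (hfar n hAn (by omega)) (r := b + 2 * (n + 1) * δ - η (b + 1) e * (ε - δ) * S)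
      (by linarith [ih (by omega)]) (by linarith) he he2 (heb.trans hεL)
    rw [hrec n, sum_Ico_succ_top hAn]
    push_cast
    linarith

end IshikawaSequence

theorem stmt_11_general {X : Type*} [MetricSpace X] (W : X → X → ℝ → X)
    (W1 : ∀ (x y z : X), ∀ l ∈ Set.Icc (0:ℝ) 1,
      dist z (W x y l) ≤ (1 - l) * dist z x + l * dist z y)
    (W3 : ∀ (x y : X), ∀ l ∈ Set.Icc (0:ℝ) 1, W x y l = W y x (1 - l))
    (η : ℝ → ℝ → ℝ)
    (hηrange : ∀ r > (0:ℝ), ∀ ε, 0 < ε → ε ≤ 2 → 0 < η r ε ∧ η r ε ≤ 1)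
    (hmod : ∀ r > (0:ℝ), ∀ ε, 0 < ε → ε ≤ 2 → ∀ a x y : X,
      dist x a ≤ r → dist y a ≤ r → ε * r ≤ dist x y →
      dist (W x y (1/2)) a ≤ (1 - η r ε) * r)
    (hηmono : ∀ ε, 0 < ε → ε ≤ 2 → ∀ r₁ r₂ : ℝ, 0 < r₁ → r₁ ≤ r₂ → η r₂ ε ≤ η r₁ ε)
    (C : Set X)
    (hC : ∀ x ∈ C, ∀ y ∈ C, ∀ l ∈ Set.Icc (0:ℝ) 1, W x y l ∈ C)
    (T : X → X) (hTC : ∀ z ∈ C, T z ∈ C)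
    (hTnon : ∀ z ∈ C, ∀ w ∈ C, dist (T z) (T w) ≤ dist z w)
    (lam s : ℕ → ℝ) (hlam : ∀ n, lam n ∈ Set.Icc (0:ℝ) 1) (hs : ∀ n, s n ∈ Set.Icc (0:ℝ) 1)
    (x0 : X) (hx0C : x0 ∈ C) (x : ℕ → X) (hx0 : x 0 = x0)
    (hrec : ∀ n, x (n+1) = W (x n) (T (W (x n) (T (x n)) (s n))) (lam n))
    (θ : ℕ → ℕ)
    (hθ : ∀ n : ℕ, (n : ℝ) ≤ ∑ k ∈ Finset.range (θ n + 1), lam k * (1 - lam k))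
    (L N₀ : ℕ) (hL : 1 ≤ L) (hsL : ∀ n ≥ N₀, s n ≤ 1 - 1 / (L:ℝ))
    (b : ℝ)
    (hafp : ∀ δ > (0:ℝ), ∃ z ∈ C, dist x0 z ≤ b ∧ dist z (T z) < δ) :
    ∀ ε > (0:ℝ), ∀ k : ℕ, ∃ N : ℕ, k ≤ N ∧
      N ≤ θ (⌈(L:ℝ) * (b+1) / (ε * η (b+1) (ε / ((L:ℝ) * (b+1))))⌉₊ + k + N₀) ∧
      dist (x N) (T (x N)) < ε := by
  intro ε hε k
  set e := ε / ((L:ℝ) * (b + 1))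
  set P := ⌈(L:ℝ) * (b + 1) / (ε * η (b + 1) e)⌉₊
  set M := θ (P + k + N₀)
  by_contra! hfar
  have hAM : k + N₀ ≤ M := le_trans (by omega) (le_of_le_sum_mul_one_sub (hθ _))
  have hAM' : ((k + N₀ : ℕ) : ℝ) ≤ M := by exact_mod_cast hAM
  set δ := min (ε / 2) (1 / (P + 2 * M + 3 : ℝ))
  have hδ : 0 < δ := by positivity
  have hδε : δ ≤ ε := (min_le_left _ _).trans (by linarith)
  have hδP : δ * (P + 2 * M + 3) ≤ 1 := (le_div_iff₀ (by positivity)).1 (min_le_right _ _)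
  obtain ⟨z, hzC, hzb, hzT⟩ := hafp δ hδ
  rw [← hx0] at hzb hx0C
  have hb : 0 ≤ b := dist_nonneg.trans hzb
  have hL' : (1:ℝ) ≤ L := by exact_mod_cast hL
  have he : 0 < e := by positivity
  have heb : e * (b + 1) = ε / L := by simp only [e]; field_simp
  have he2 : e ≤ 2 := by
    have := (hfar (k + N₀) le_self_add hAM).trans
      (dist_ishikawa_map_le hC hTC hlam hs hrec hTnon W1 hx0C hzC hzT.le hδ.le (k + N₀))
    rw [div_le_iff₀ (by positivity)]
    nlinarith [mul_le_mul_of_nonneg_right hAM' hδ.le]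
  obtain ⟨hη, hη1⟩ := hηrange (b + 1) (by linarith) e he he2
  have hinv := ishikawa_dist_add_sum_le hC hTC hlam hs hrec hTnon W1 η
    (fun r hr ε h1 h2 => (hηrange r hr ε h1 h2).1) hmod W3 hηmono hx0C hzC hzT.le hδ hδε
    (by nlinarith) hzb (A := k + N₀) (fun n hn => hsL n (by omega)) he he2 heb.le
    (fun n hn => hfar n (by omega)) (M + 1) (by omega) le_rfl
  have hsum : (P : ℝ) ≤ ∑ i ∈ Ico (k + N₀) (M + 1), lam i * (1 - lam i) := by
    have := sub_le_sum_Ico_mul_one_sub (A := k + N₀) (by omega) (hθ (P + k + N₀))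
    push_cast at this
    linarith
  have hP : L * (b + 1) ≤ P * (ε * η (b + 1) e) :=
    (div_le_iff₀ (by positivity)).1 (Nat.le_ceil _)
  have hεδ : 0 ≤ η (b + 1) e * (ε - δ) := mul_nonneg hη.le (by linarith)
  push_cast at hinv
  nlinarith [mul_le_mul_of_nonneg_left hsum hεδ, dist_nonneg (x := x (M + 1)) (y := z),
    mul_le_mul_of_nonneg_right hη1 (by positivity : (0:ℝ) ≤ δ * P)]

theorem stmt_11 {X : Type*} [MetricSpace X] (W : X → X → ℝ → X)
    (W1 : ∀ (x y z : X), ∀ l ∈ Set.Icc (0:ℝ) 1,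
      dist z (W x y l) ≤ (1 - l) * dist z x + l * dist z y)
    (W2 : ∀ (x y : X), ∀ l ∈ Set.Icc (0:ℝ) 1, ∀ l' ∈ Set.Icc (0:ℝ) 1,
      dist (W x y l) (W x y l') = |l - l'| * dist x y)
    (W3 : ∀ (x y : X), ∀ l ∈ Set.Icc (0:ℝ) 1, W x y l = W y x (1 - l))
    (W4 : ∀ (x y z w : X), ∀ l ∈ Set.Icc (0:ℝ) 1,
      dist (W x z l) (W y w l) ≤ (1 - l) * dist x y + l * dist z w)
    (η : ℝ → ℝ → ℝ)
    (hηrange : ∀ r > (0:ℝ), ∀ ε, 0 < ε → ε ≤ 2 → 0 < η r ε ∧ η r ε ≤ 1)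
    (hmod : ∀ r > (0:ℝ), ∀ ε, 0 < ε → ε ≤ 2 → ∀ a x y : X,
      dist x a ≤ r → dist y a ≤ r → ε * r ≤ dist x y →
      dist (W x y (1/2)) a ≤ (1 - η r ε) * r)
    (hηmono : ∀ ε, 0 < ε → ε ≤ 2 → ∀ r₁ r₂ : ℝ, 0 < r₁ → r₁ ≤ r₂ → η r₂ ε ≤ η r₁ ε)
    (C : Set X)
    (hC : ∀ x ∈ C, ∀ y ∈ C, ∀ l ∈ Set.Icc (0:ℝ) 1, W x y l ∈ C)
    (T : X → X) (hTC : ∀ z ∈ C, T z ∈ C)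
    (hTnon : ∀ z ∈ C, ∀ w ∈ C, dist (T z) (T w) ≤ dist z w)
    (lam s : ℕ → ℝ) (hlam : ∀ n, lam n ∈ Set.Icc (0:ℝ) 1) (hs : ∀ n, s n ∈ Set.Icc (0:ℝ) 1)
    (x0 : X) (hx0C : x0 ∈ C) (x : ℕ → X) (hx0 : x 0 = x0)
    (hrec : ∀ n, x (n+1) = W (x n) (T (W (x n) (T (x n)) (s n))) (lam n))
    (θ : ℕ → ℕ)
    (hθ : ∀ n : ℕ, (n : ℝ) ≤ ∑ k ∈ Finset.range (θ n + 1), lam k * (1 - lam k))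
    (L N₀ : ℕ) (hL : 1 ≤ L) (hsL : ∀ n ≥ N₀, s n ≤ 1 - 1 / (L:ℝ))
    (b : ℝ) (hb : 0 < b)
    (hafp : ∀ δ > (0:ℝ), ∃ z ∈ C, dist x0 z ≤ b ∧ dist z (T z) < δ) :
    ∀ ε > (0:ℝ), ∀ k : ℕ, ∃ N : ℕ, k ≤ N ∧
      N ≤ θ (⌈(L:ℝ) * (b+1) / (ε * η (b+1) (ε / ((L:ℝ) * (b+1))))⌉₊ + k + N₀) ∧
      dist (x N) (T (x N)) < ε :=
  stmt_11_general W W1 W3 η hηrange hmod hηmono C hC T hTC hTnon lam s hlam hs x0 hx0C x hx0 hrec θ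
    hθ L N₀ hL hsL b hafp
end

section
/- Every CAT(0) space is a UCW-hyperbolic space with modulus of uniform convexity η(r,ε) = ε²/8 (independent of r, hence trivially nonincreasing in r): for all r>0, ε∈(0,2], and points a,x,y with d(x,a) ≤ r, d(y,a) ≤ r, d(x,y) ≥ εr, the midpoint m of x and y satisfies d(m,a) ≤ (1 - ε²/8)·r. -/
/-! The CN inequality with base point `a` bounds `d(m, a)²` by `r² - (εr)²/4`, and
`1 - ε²/4 ≤ (1 - ε²/8)²`, so taking square roots gives the modulus `ε²/8`. -/

lemma dist_midpoint_sq_le_of_CN {X : Type*} [MetricSpace X] (m : X → X → X)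
    (hCN : ∀ x y z : X,
      dist x (m y z) ^ 2 ≤ (1/2) * dist x y ^ 2 + (1/2) * dist x z ^ 2 - (1/4) * dist y z ^ 2)
    {a x y : X} {r δ : ℝ} (hδ : 0 ≤ δ) (hxa : dist x a ≤ r) (hya : dist y a ≤ r)
    (hxy : δ ≤ dist x y) :
    dist (m x y) a ^ 2 ≤ r ^ 2 - δ ^ 2 / 4 := by
  have hx : dist a x ^ 2 ≤ r ^ 2 := pow_le_pow_left₀ dist_nonneg (dist_comm a x ▸ hxa) 2
  have hy : dist a y ^ 2 ≤ r ^ 2 := pow_le_pow_left₀ dist_nonneg (dist_comm a y ▸ hya) 2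
  have hδxy : δ ^ 2 ≤ dist x y ^ 2 := pow_le_pow_left₀ hδ hxy 2
  rw [dist_comm]
  linarith [hCN a x y]

lemma one_sub_sq_div_four_le_sq (ε : ℝ) : 1 - ε ^ 2 / 4 ≤ (1 - ε ^ 2 / 8) ^ 2 := by
  nlinarith [sq_nonneg (ε ^ 2)]

theorem stmt_16_general {X : Type*} [MetricSpace X] (m : X → X → X)
    (hCN : ∀ x y z : X,
      dist x (m y z) ^ 2 ≤ (1/2) * dist x y ^ 2 + (1/2) * dist x z ^ 2 - (1/4) * dist y z ^ 2) :
    ∀ r > (0:ℝ), ∀ ε, 0 < ε → ε ≤ 2 → ∀ a x y : X,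
      dist x a ≤ r → dist y a ≤ r → ε * r ≤ dist x y →
      dist (m x y) a ≤ (1 - ε ^ 2 / 8) * r := by
  intro r hr ε hε hε2 a x y hxa hya hxy
  have hsq := dist_midpoint_sq_le_of_CN m hCN (by positivity) hxa hya hxy
  have hcoef : 0 ≤ 1 - ε ^ 2 / 8 := by nlinarith
  refine (pow_le_pow_iff_left₀ dist_nonneg (by positivity) two_ne_zero).mp ?_
  calc dist (m x y) a ^ 2 ≤ r ^ 2 - (ε * r) ^ 2 / 4 := hsq
    _ = (1 - ε ^ 2 / 4) * r ^ 2 := by ring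
    _ ≤ (1 - ε ^ 2 / 8) ^ 2 * r ^ 2 := by gcongr; exact one_sub_sq_div_four_le_sq ε
    _ = ((1 - ε ^ 2 / 8) * r) ^ 2 := by ring

theorem stmt_16 {X : Type*} [MetricSpace X] (m : X → X → X)
    (hmid : ∀ y z : X, dist y (m y z) = dist y z / 2 ∧ dist z (m y z) = dist y z / 2)
    (hCN : ∀ x y z : X,
      dist x (m y z) ^ 2 ≤ (1/2) * dist x y ^ 2 + (1/2) * dist x z ^ 2 - (1/4) * dist y z ^ 2) :
    ∀ r > (0:ℝ), ∀ ε, 0 < ε → ε ≤ 2 → ∀ a x y : X,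
      dist x a ≤ r → dist y a ≤ r → ε * r ≤ dist x y →
      dist (m x y) a ≤ (1 - ε ^ 2 / 8) * r :=
  stmt_16_general m hCN
end
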